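/- arXiv:1401.7155 — 6 statements merged into one kernel-verified Lean document; each statement's English description precedes it below -/
import Mathlib

section
/- Let I, J ⊆ ℝ be open intervals, let α, β : I → ℝ be smooth with β nonvanishing, let A : I → ℝ be an antiderivative of α (A' = α) and P : I → ℝ an antiderivative of e^{−A} (P' = e^{−A}). Let δ₁, δ₂, δ₃, δ₄ ∈ ℝ with (δ₃, δ₄) ≠ (0,0) and δ₃P(t) + δ₄ ≠ 0 for all t ∈ I, and set X¹(t) = 1/(δ₃P(t) + δ₄). Let T : I → J be a smooth bijection with T'(t) ≠ 0 for all t ∈ I. Define α̃, β̃ : J → ℝ by α̃(T(t)) = (1/T'(t))·(α(t) − 2X¹'(t)/X¹(t) + T''(t)/T'(t)) and β̃(T(t)) = X¹(t)⁵ β(t)/T'(t). Suppose u : I × ℝ → ℝ is a smooth solution of u_t + u u_x + α(t) u + β(t) u_xxxxx = 0 on I × ℝ, and ũ : J × ℝ → ℝ is a smooth function satisfying ũ(T(t), X¹(t)(x + δ₁) + δ₂) = (1/T'(t))·(X¹(t) u(t,x) + X¹'(t)(x + δ₁)) for all (t,x) ∈ I × ℝ. Then ũ satisfies ũ_s + ũ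 ũ_y + α̃(s) ũ + β̃(s) ũ_yyyyy = 0 at every point (s,y) ∈ J × ℝ. -/
open Real Set

/-- Partial derivative in `t`. -/
noncomputable def ut (u : ℝ → ℝ → ℝ) (t x : ℝ) : ℝ := deriv (fun s => u s x) t
/-- Partial derivative in `x`. -/
noncomputable def ux (u : ℝ → ℝ → ℝ) (t x : ℝ) : ℝ := deriv (u t) x
/-- Fifth partial derivative in `x`. -/
noncomputable def ux5 (u : ℝ → ℝ → ℝ) (t x : ℝ) : ℝ := iteratedDeriv 5 (u t) x

/-- Auxiliary: fifth derivative of `K f + affine` is `K f⁽⁵⁾`. -/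
lemma aux5 (f : ℝ → ℝ) (hf : ContDiff ℝ (⊤ : ℕ∞) f) (K m q x : ℝ) :
    iteratedDeriv 5 (fun ξ => K * f ξ + (m * ξ + q)) x = K * iteratedDeriv 5 f x := by
  have hf1 : ContDiff ℝ (⊤ : ℕ∞) (deriv f) := (contDiff_infty_iff_deriv.mp hf).2
  have hf2 : ContDiff ℝ (⊤ : ℕ∞) (deriv (deriv f)) := (contDiff_infty_iff_deriv.mp hf1).2
  have hd1 : deriv (fun ξ => K * f ξ + (m * ξ + q)) = fun ξ => K * deriv f ξ + m := by
    funext ξ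
    have h1 : DifferentiableAt ℝ (fun ξ : ℝ => K * f ξ) ξ :=
      (hf.differentiable (by simp) ξ).const_mul K
    have h2 : DifferentiableAt ℝ (fun ξ : ℝ => m * ξ + q) ξ :=
      ((differentiable_id.const_mul m).add_const q).differentiableAt
    rw [deriv_fun_add h1 h2, deriv_const_mul K (hf.differentiable (by simp) ξ)]
    have h3 : HasDerivAt (fun ξ : ℝ => m * ξ + q) m ξ := by
      simpa using ((hasDerivAt_id ξ).const_mul m).add_const q
    rw [h3.deriv]
  have hd2 : deriv (fun ξ => K * deriv f ξ + m) = fun ξ => K * deriv (deriv f) ξ := by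
    funext ξ
    rw [deriv_add_const, deriv_const_mul K (hf1.differentiable (by simp) ξ)]
  rw [show (5 : ℕ) = 4 + 1 from rfl, iteratedDeriv_succ', hd1,
    show (4 : ℕ) = 3 + 1 from rfl, iteratedDeriv_succ', hd2,
    iteratedDeriv_succ' (f := f), iteratedDeriv_succ' (f := deriv f)]
  rw [← iteratedDerivWithin_univ, ← iteratedDerivWithin_univ (f := deriv (deriv f))]
  exact iteratedDerivWithin_const_mul (mem_univ x) uniqueDiffOn_univ K (hf2.of_le (WithTop.coe_le_coe.mpr (by simp))).contDiffWithinAt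

set_option maxHeartbeats 1600000 in
/-- the transformations of the generalized extended equivalence group
of `u_t + u u_x + α(t) u + β(t) u_xxxxx = 0` map solutions to solutions of the
transformed equation (forward part of Theorem 1). -/
theorem stmt_0
    (I J : Set ℝ) (hI : IsOpen I) (hIint : I.OrdConnected)
    (hJ : IsOpen J) (hJint : J.OrdConnected)
    (α β : ℝ → ℝ) (hα : ContDiffOn ℝ (⊤ : ℕ∞) α I) (hβ : ContDiffOn ℝ (⊤ : ℕ∞) β I)
    (hβ0 : ∀ t ∈ I, β t ≠ 0)
    (A P : ℝ → ℝ) (hA : ∀ t ∈ I, HasDerivAt A (α t) t)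
    (hP : ∀ t ∈ I, HasDerivAt P (Real.exp (-A t)) t)
    (δ₁ δ₂ δ₃ δ₄ : ℝ) (hδ : (δ₃, δ₄) ≠ (0, 0))
    (hden : ∀ t ∈ I, δ₃ * P t + δ₄ ≠ 0)
    (X1 : ℝ → ℝ) (hX1 : ∀ t : ℝ, X1 t = 1 / (δ₃ * P t + δ₄))
    (T : ℝ → ℝ) (hT : ContDiffOn ℝ (⊤ : ℕ∞) T I) (hTbij : Set.BijOn T I J)
    (hT' : ∀ t ∈ I, deriv T t ≠ 0)
    (αt βt : ℝ → ℝ)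
    (hαt : ∀ t ∈ I, αt (T t) =
      1 / deriv T t *
        (α t - 2 * deriv X1 t / X1 t + deriv (deriv T) t / deriv T t))
    (hβt : ∀ t ∈ I, βt (T t) = X1 t ^ 5 * β t / deriv T t)
    (u : ℝ → ℝ → ℝ)
    (hu : ContDiffOn ℝ (⊤ : ℕ∞) (fun p : ℝ × ℝ => u p.1 p.2) (I ×ˢ (univ : Set ℝ)))
    (husol : ∀ t ∈ I, ∀ x : ℝ,
      ut u t x + u t x * ux u t x + α t * u t x + β t * ux5 u t x = 0)
    (v : ℝ → ℝ → ℝ)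
    (hv : ContDiffOn ℝ (⊤ : ℕ∞) (fun p : ℝ × ℝ => v p.1 p.2) (J ×ˢ (univ : Set ℝ)))
    (hlink : ∀ t ∈ I, ∀ x : ℝ,
      v (T t) (X1 t * (x + δ₁) + δ₂) =
        1 / deriv T t * (X1 t * u t x + deriv X1 t * (x + δ₁))) :
    ∀ s ∈ J, ∀ y : ℝ,
      ut v s y + v s y * ux v s y + αt s * v s y + βt s * ux5 v s y = 0 := by
  intro s hs y
  obtain ⟨t, ht, hts⟩ := hTbij.surjOn hs
  have hcne : X1 t ≠ 0 := by rw [hX1 t]; exact one_div_ne_zero (hden t ht)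
  have hT1ne : deriv T t ≠ 0 := hT' t ht
  have hbne : β t ≠ 0 := hβ0 t ht
  set x : ℝ := (y - δ₂) / X1 t - δ₁ with hxdef
  have hy : X1 t * (x + δ₁) + δ₂ = y := by
    rw [hxdef]; field_simp; ring
  -- derivative of X1 on I
  have hX1' : ∀ τ ∈ I, HasDerivAt X1 (-(δ₃ * Real.exp (-A τ)) * X1 τ ^ 2) τ := by
    intro τ hτ
    have hDτ := hden τ hτ
    have h1 : HasDerivAt (fun r => δ₃ * P r + δ₄) (δ₃ * Real.exp (-A τ)) τ :=
      ((hP τ hτ).const_mul δ₃).add_const δ₄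
    have h2 := h1.inv hDτ
    have hfun : X1 = fun r => (δ₃ * P r + δ₄)⁻¹ := funext fun r => by rw [hX1 r, one_div]
    rw [hfun]
    exact h2.congr_deriv (by beta_reduce; rw [inv_pow, div_eq_mul_inv])
  have hX1t : HasDerivAt X1 (deriv X1 t) t := (hX1' t ht).differentiableAt.hasDerivAt
  have hc1 : deriv X1 t = -(δ₃ * Real.exp (-A t)) * X1 t ^ 2 := (hX1' t ht).deriv
  -- second derivative of X1
  have hEneg : HasDerivAt (fun τ => -(δ₃ * Real.exp (-A τ)))
      (-(δ₃ * (Real.exp (-A t) * -α t))) t :=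
    (((hA t ht).neg.exp).const_mul δ₃).neg
  have hsq : HasDerivAt (fun τ => X1 τ ^ 2) ((2 : ℝ) * X1 t ^ 1 * deriv X1 t) t :=
    hX1t.pow 2
  have hmul := hEneg.mul hsq
  have heqd : deriv X1 =ᶠ[nhds t] fun τ => -(δ₃ * Real.exp (-A τ)) * X1 τ ^ 2 := by
    filter_upwards [hI.mem_nhds ht] with τ hτ
    exact (hX1' τ hτ).deriv
  have hX1d2 : HasDerivAt (deriv X1)
      (-(δ₃ * (Real.exp (-A t) * -α t)) * X1 t ^ 2 +
        -(δ₃ * Real.exp (-A t)) * ((2 : ℝ) * X1 t ^ 1 * deriv X1 t)) t :=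
    hmul.congr_of_eventuallyEq heqd
  -- derivatives of T
  have hT1 : HasDerivAt T (deriv T t) t :=
    ((hT.contDiffAt (hI.mem_nhds ht)).differentiableAt (by simp)).hasDerivAt
  have hT2 : HasDerivAt (deriv T) (deriv (deriv T) t) t :=
    (((hT.deriv_of_isOpen (m := 1) hI (WithTop.coe_le_coe.mpr le_top)).contDiffAt (hI.mem_nhds ht)).differentiableAt
      (by simp)).hasDerivAt
  -- smoothness of slices
  have hmemu : ((t, x) : ℝ × ℝ) ∈ I ×ˢ (univ : Set ℝ) := ⟨ht, mem_univ x⟩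
  have hmemv : ((s, y) : ℝ × ℝ) ∈ J ×ˢ (univ : Set ℝ) := ⟨hs, mem_univ y⟩
  have huC : ContDiffAt ℝ (⊤ : ℕ∞) (fun p : ℝ × ℝ => u p.1 p.2) (t, x) :=
    hu.contDiffAt ((hI.prod isOpen_univ).mem_nhds hmemu)
  have hvC : ContDiffAt ℝ (⊤ : ℕ∞) (fun p : ℝ × ℝ => v p.1 p.2) (s, y) :=
    hv.contDiffAt ((hJ.prod isOpen_univ).mem_nhds hmemv)
  have hvdiff : DifferentiableAt ℝ (fun p : ℝ × ℝ => v p.1 p.2) (s, y) :=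
    hvC.differentiableAt (by simp)
  have huslice : ContDiff ℝ (⊤ : ℕ∞) (u t) := by
    rw [contDiff_iff_contDiffAt]
    intro ξ
    have h1 : ContDiffAt ℝ (⊤ : ℕ∞) (fun p : ℝ × ℝ => u p.1 p.2) (t, ξ) :=
      hu.contDiffAt ((hI.prod isOpen_univ).mem_nhds ⟨ht, mem_univ ξ⟩)
    have h2 : ContDiffAt ℝ (⊤ : ℕ∞) (fun ξ' : ℝ => ((t, ξ') : ℝ × ℝ)) ξ :=
      contDiffAt_const.prodMk contDiffAt_id
    exact ((h1.comp ξ h2).of_le (by simp) : ContDiffAt ℝ (⊤ : ℕ∞) _ ξ)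
  have hvslice : ContDiff ℝ (⊤ : ℕ∞) (v s) := by
    rw [contDiff_iff_contDiffAt]
    intro ξ
    have h1 : ContDiffAt ℝ (⊤ : ℕ∞) (fun p : ℝ × ℝ => v p.1 p.2) (s, ξ) :=
      hv.contDiffAt ((hJ.prod isOpen_univ).mem_nhds ⟨hs, mem_univ ξ⟩)
    have h2 : ContDiffAt ℝ (⊤ : ℕ∞) (fun ξ' : ℝ => ((s, ξ') : ℝ × ℝ)) ξ :=
      contDiffAt_const.prodMk contDiffAt_id
    exact ((h1.comp ξ h2).of_le (by simp) : ContDiffAt ℝ (⊤ : ℕ∞) _ ξ)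
  -- derivative of u in t
  have hut : HasDerivAt (fun τ => u τ x) (ut u t x) t := by
    have hud : DifferentiableAt ℝ (fun τ => u τ x) t := by
      have h2 : DifferentiableAt ℝ (fun τ : ℝ => ((τ, x) : ℝ × ℝ)) t :=
        differentiableAt_id.prodMk (differentiableAt_const x)
      simpa [Function.comp_def] using (huC.differentiableAt (by simp)).comp t h2
    exact hud.hasDerivAt
  -- fderiv of v
  set L := fderiv ℝ (fun p : ℝ × ℝ => v p.1 p.2) (s, y) with hLdef
  have hvt : HasDerivAt (fun τ => v τ y) (L (1, 0)) s := by
    have h2 : HasDerivAt (fun τ : ℝ => ((τ, y) : ℝ × ℝ)) ((1 : ℝ), (0 : ℝ)) s :=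
      (hasDerivAt_id s).prodMk (hasDerivAt_const s y)
    simpa [Function.comp_def] using hvdiff.hasFDerivAt.comp_hasDerivAt s h2
  have hvx : HasDerivAt (fun ξ => v s ξ) (L (0, 1)) y := by
    have h2 : HasDerivAt (fun ξ : ℝ => ((s, ξ) : ℝ × ℝ)) ((0 : ℝ), (1 : ℝ)) y :=
      (hasDerivAt_const y s).prodMk (hasDerivAt_id y)
    simpa [Function.comp_def] using hvdiff.hasFDerivAt.comp_hasDerivAt y h2
  have hutv : ut v s y = L (1, 0) := hvt.deriv
  have huxv : ux v s y = L (0, 1) := hvx.deriv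
  -- chain rule in t
  have hpt : ((T t, X1 t * (x + δ₁) + δ₂) : ℝ × ℝ) = (s, y) := by rw [hts, hy]
  have hF : HasFDerivAt (fun p : ℝ × ℝ => v p.1 p.2) L (T t, X1 t * (x + δ₁) + δ₂) := by
    rw [hpt]; exact hvdiff.hasFDerivAt
  have hpair : HasDerivAt (fun τ => ((T τ, X1 τ * (x + δ₁) + δ₂) : ℝ × ℝ))
      (deriv T t, deriv X1 t * (x + δ₁)) t :=
    hT1.prodMk ((hX1t.mul_const (x + δ₁)).add_const δ₂)
  have hchain : HasDerivAt (fun τ => v (T τ) (X1 τ * (x + δ₁) + δ₂))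
      (L (deriv T t, deriv X1 t * (x + δ₁))) t := by
    simpa [Function.comp_def] using hF.comp_hasDerivAt t hpair
  -- derivative of the rhs of the link in t
  have hinv : HasDerivAt (fun τ => (deriv T τ)⁻¹)
      (-deriv (deriv T) t / deriv T t ^ 2) t := hT2.inv hT1ne
  have hsum : HasDerivAt (fun τ => X1 τ * u τ x + deriv X1 τ * (x + δ₁))
      ((deriv X1 t * u t x + X1 t * ut u t x) +
        (-(δ₃ * (Real.exp (-A t) * -α t)) * X1 t ^ 2 +
          -(δ₃ * Real.exp (-A t)) * ((2 : ℝ) * X1 t ^ 1 * deriv X1 t)) * (x + δ₁)) t :=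
    (hX1t.mul hut).add (hX1d2.mul_const (x + δ₁))
  have hRt : HasDerivAt (fun τ => (deriv T τ)⁻¹ * (X1 τ * u τ x + deriv X1 τ * (x + δ₁)))
      (-deriv (deriv T) t / deriv T t ^ 2 * (X1 t * u t x + deriv X1 t * (x + δ₁)) +
        (deriv T t)⁻¹ *
          ((deriv X1 t * u t x + X1 t * ut u t x) +
            (-(δ₃ * (Real.exp (-A t) * -α t)) * X1 t ^ 2 +
              -(δ₃ * Real.exp (-A t)) * ((2 : ℝ) * X1 t ^ 1 * deriv X1 t)) * (x + δ₁))) t :=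
    hinv.mul hsum
  have heqt : (fun τ => v (T τ) (X1 τ * (x + δ₁) + δ₂)) =ᶠ[nhds t]
      (fun τ => (deriv T τ)⁻¹ * (X1 τ * u τ x + deriv X1 τ * (x + δ₁))) := by
    filter_upwards [hI.mem_nhds ht] with τ hτ
    rw [hlink τ hτ x, one_div]
  have e2 : L (deriv T t, deriv X1 t * (x + δ₁)) =
      -deriv (deriv T) t / deriv T t ^ 2 * (X1 t * u t x + deriv X1 t * (x + δ₁)) +
        (deriv T t)⁻¹ *
          ((deriv X1 t * u t x + X1 t * ut u t x) +
            (-(δ₃ * (Real.exp (-A t) * -α t)) * X1 t ^ 2 +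
              -(δ₃ * Real.exp (-A t)) * ((2 : ℝ) * X1 t ^ 1 * deriv X1 t)) * (x + δ₁)) := by
    rw [← hchain.deriv, ← hRt.deriv]
    exact heqt.deriv_eq
  have hLlin : L (deriv T t, deriv X1 t * (x + δ₁)) =
      deriv T t * L (1, 0) + (deriv X1 t * (x + δ₁)) * L (0, 1) := by
    have hsplit : ((deriv T t, deriv X1 t * (x + δ₁)) : ℝ × ℝ) =
        deriv T t • ((1 : ℝ), (0 : ℝ)) + (deriv X1 t * (x + δ₁)) • ((0 : ℝ), (1 : ℝ)) := by
      simp [Prod.ext_iff]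
    rw [hsplit, map_add, map_smul, map_smul, smul_eq_mul, smul_eq_mul]
  have E2 : deriv T t * ut v s y + (deriv X1 t * (x + δ₁)) * ux v s y =
      -deriv (deriv T) t / deriv T t ^ 2 * (X1 t * u t x + deriv X1 t * (x + δ₁)) +
        (deriv T t)⁻¹ *
          ((deriv X1 t * u t x + X1 t * ut u t x) +
            (-(δ₃ * (Real.exp (-A t) * -α t)) * X1 t ^ 2 +
              -(δ₃ * Real.exp (-A t)) * ((2 : ℝ) * X1 t ^ 1 * deriv X1 t)) * (x + δ₁)) := by
    rw [hutv, huxv, ← hLlin]; exact e2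
  -- x-direction: the two functions of ξ coincide
  have hxeq : (fun ξ => v s (X1 t * ξ + (X1 t * δ₁ + δ₂))) =
      (fun ξ => (deriv T t)⁻¹ * (X1 t * u t ξ + deriv X1 t * (ξ + δ₁))) := by
    funext ξ
    have h1 := hlink t ht ξ
    rw [hts] at h1
    have harg : X1 t * (ξ + δ₁) + δ₂ = X1 t * ξ + (X1 t * δ₁ + δ₂) := by ring
    rw [harg] at h1
    rw [h1, one_div]
  have hyk : X1 t * x + (X1 t * δ₁ + δ₂) = y := by rw [← hy]; ring
  -- first x-derivative
  have hinner : HasDerivAt (fun ξ => X1 t * ξ + (X1 t * δ₁ + δ₂)) (X1 t) x := by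
    simpa using ((hasDerivAt_id x).const_mul (X1 t)).add_const (X1 t * δ₁ + δ₂)
  have houter : HasDerivAt (v s) (deriv (v s) y) (X1 t * x + (X1 t * δ₁ + δ₂)) := by
    rw [hyk]
    exact (hvslice.differentiable (by simp) y).hasDerivAt
  have hL3 : HasDerivAt (fun ξ => v s (X1 t * ξ + (X1 t * δ₁ + δ₂)))
      (deriv (v s) y * X1 t) x := by
    simpa [Function.comp_def] using houter.comp x hinner
  have hR3 : HasDerivAt (fun ξ => (deriv T t)⁻¹ * (X1 t * u t ξ + deriv X1 t * (ξ + δ₁)))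
      ((deriv T t)⁻¹ * (X1 t * ux u t x + deriv X1 t)) x := by
    have h1 : HasDerivAt (u t) (ux u t x) x := (huslice.differentiable (by simp) x).hasDerivAt
    simpa using (((h1.const_mul (X1 t)).add
      (((hasDerivAt_id x).add_const δ₁).const_mul (deriv X1 t))).const_mul (deriv T t)⁻¹)
  have E3 : ux v s y * X1 t = (deriv T t)⁻¹ * (X1 t * ux u t x + deriv X1 t) := by
    have hL3' : HasDerivAt (fun ξ => (deriv T t)⁻¹ * (X1 t * u t ξ + deriv X1 t * (ξ + δ₁)))
        (deriv (v s) y * X1 t) x := hxeq ▸ hL3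
    exact hL3'.unique hR3
  -- fifth x-derivative
  have E4 : X1 t ^ 5 * ux5 v s y = ((deriv T t)⁻¹ * X1 t) * ux5 u t x := by
    have hg2 : ContDiff ℝ (5 : ℕ) (fun z => v s (z + (X1 t * δ₁ + δ₂))) :=
      (hvslice.comp (contDiff_id.add contDiff_const)).of_le (WithTop.coe_le_coe.mpr (by simp))
    have hlhs : iteratedDeriv 5 (fun ξ => v s (X1 t * ξ + (X1 t * δ₁ + δ₂))) x =
        X1 t ^ 5 * ux5 v s y := by
      have h2 := iteratedDeriv_comp_const_mul hg2 (X1 t)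
      have h3 := iteratedDeriv_comp_add_const 5 (v s) (X1 t * δ₁ + δ₂)
      calc iteratedDeriv 5 (fun ξ => v s (X1 t * ξ + (X1 t * δ₁ + δ₂))) x
          = X1 t ^ 5 * iteratedDeriv 5 (fun z => v s (z + (X1 t * δ₁ + δ₂))) (X1 t * x) := by
            exact congrFun h2 x
        _ = X1 t ^ 5 * iteratedDeriv 5 (v s) (X1 t * x + (X1 t * δ₁ + δ₂)) := by
            rw [congrFun h3 (X1 t * x)]
        _ = X1 t ^ 5 * ux5 v s y := by rw [hyk]; rfl
    have hrhs : iteratedDeriv 5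
        (fun ξ => (deriv T t)⁻¹ * (X1 t * u t ξ + deriv X1 t * (ξ + δ₁))) x =
        ((deriv T t)⁻¹ * X1 t) * ux5 u t x := by
      have hshape : (fun ξ => (deriv T t)⁻¹ * (X1 t * u t ξ + deriv X1 t * (ξ + δ₁))) =
          (fun ξ => ((deriv T t)⁻¹ * X1 t) * u t ξ +
            (((deriv T t)⁻¹ * deriv X1 t) * ξ + (deriv T t)⁻¹ * deriv X1 t * δ₁)) := by
        funext ξ; ring
      rw [hshape]
      exact aux5 (u t) huslice ((deriv T t)⁻¹ * X1 t)
        ((deriv T t)⁻¹ * deriv X1 t) ((deriv T t)⁻¹ * deriv X1 t * δ₁) x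
    rw [← hlhs, hxeq, hrhs]
  -- link value
  have hV : v s y = (deriv T t)⁻¹ * (X1 t * u t x + deriv X1 t * (x + δ₁)) := by
    have h1 := hlink t ht x
    rw [hts, hy] at h1
    rw [h1, one_div]
  -- transformed coefficients at s
  have hαs : αt s = 1 / deriv T t *
      (α t - 2 * deriv X1 t / X1 t + deriv (deriv T) t / deriv T t) := by
    rw [← hts]; exact hαt t ht
  have hβs : βt s = X1 t ^ 5 * β t / deriv T t := by rw [← hts]; exact hβt t ht
  -- solved forms
  have hVx : ux v s y = (deriv T t)⁻¹ * (X1 t * ux u t x + deriv X1 t) / X1 t :=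
    eq_div_of_mul_eq hcne E3
  have hV5 : ux5 v s y = ((deriv T t)⁻¹ * X1 t) * ux5 u t x / X1 t ^ 5 := by
    have h5 : (X1 t : ℝ) ^ 5 ≠ 0 := pow_ne_zero 5 hcne
    rw [eq_div_iff (pow_ne_zero 5 hcne)]
    linear_combination E4
  have hVt : ut v s y =
      (-deriv (deriv T) t / deriv T t ^ 2 * (X1 t * u t x + deriv X1 t * (x + δ₁)) +
        (deriv T t)⁻¹ *
          ((deriv X1 t * u t x + X1 t * ut u t x) +
            (-(δ₃ * (Real.exp (-A t) * -α t)) * X1 t ^ 2 +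
              -(δ₃ * Real.exp (-A t)) * ((2 : ℝ) * X1 t ^ 1 * deriv X1 t)) * (x + δ₁)) -
        (deriv X1 t * (x + δ₁)) * ux v s y) / deriv T t := by
    rw [eq_div_iff hT1ne]
    linear_combination E2
  have hU5 : ux5 u t x = -(ut u t x + u t x * ux u t x + α t * u t x) / β t := by
    rw [eq_div_iff hbne]
    linear_combination husol t ht x
  rw [hVt, hVx, hV5, hU5, hV, hαs, hβs, hc1]
  field_simp
  ring
end

section
/- Let a, b, c, d, e₀, e₁, e₂ ∈ ℝ with Δ := ad − bc ≠ 0 and e₂ ≠ 0. Let I ⊆ ℝ be an open interval on which ct + d ≠ 0, let β : I → ℝ be smooth and nonvanishing, and let J be the image of I under t ↦ (at + b)/(ct + d) (an open interval). Suppose u : I × ℝ → ℝ is a smooth solution of u_t + u u_x + β(t) u_xxxxx = 0, and ũ : J × ℝ → ℝ is the smooth function determined by ũ((at + b)/(ct + d), (e₂x + e₁t + e₀)/(ct + d)) = (e₂(ct + d) u(t,x) − e₂cx − e₀c + e₁d)/Δ for all (t,x) ∈ I × ℝ. Then ũ satisfies ũ_s + ũ ũ_y + β̃(s) ũ_yyyyy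 = 0 on J × ℝ, where β̃ : J → ℝ is defined by β̃((at + b)/(ct + d)) = e₂⁵ β(t)/((ct + d)³ Δ). -/
open Real Set

/- ### Auxiliary lemmas -/

private lemma iter_const_succ (q : ℝ) (n : ℕ) :
    iteratedDeriv (n + 1) (fun _ : ℝ => q) = fun _ => (0 : ℝ) := by
  induction n generalizing q with
  | zero => simpa [iteratedDeriv_one] using deriv_const' q
  | succ n ih =>
    rw [iteratedDeriv_succ']
    have : deriv (fun _ : ℝ => q) = fun _ : ℝ => (0 : ℝ) := deriv_const' q
    rw [this, ih 0]

private lemma iter_cmul (A : ℝ) {f : ℝ → ℝ} (hf : ContDiff ℝ (⊤ : ℕ∞) f) (n : ℕ) :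
    iteratedDeriv n (fun z => A * f z) = fun z => A * iteratedDeriv n f z := by
  funext z
  rw [← iteratedDerivWithin_univ, ← iteratedDerivWithin_univ]
  exact iteratedDerivWithin_const_mul (mem_univ z) uniqueDiffOn_univ A
    ((hf.of_le (by exact_mod_cast le_top)).contDiffWithinAt)

private lemma iter_aff (f : ℝ → ℝ) (hf : ContDiff ℝ (⊤ : ℕ∞) f) (k m : ℝ) (n : ℕ) :
    iteratedDeriv n (fun z => f (k * z + m)) =
      fun z => k ^ n * iteratedDeriv n f (k * z + m) := by
  have hg : ContDiff ℝ (⊤ : ℕ∞) (fun w => f (w + m)) :=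
    hf.comp (contDiff_id.add contDiff_const)
  calc iteratedDeriv n (fun z => f (k * z + m))
      = iteratedDeriv n (fun z => (fun w => f (w + m)) (k * z)) := rfl
    _ = fun z => k ^ n * iteratedDeriv n (fun w => f (w + m)) (k * z) :=
        iteratedDeriv_comp_const_mul (hg.of_le (by exact_mod_cast le_top)) k
    _ = fun z => k ^ n * iteratedDeriv n f (k * z + m) := by
        rw [iteratedDeriv_comp_add_const]

private lemma iter5_comb (g : ℝ → ℝ) (hg : ContDiff ℝ (⊤ : ℕ∞) g) (A B C : ℝ) (y : ℝ) :
    iteratedDeriv 5 (fun z => A * g z + (B * z + C)) y = A * iteratedDeriv 5 g y := by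
  have hf1 : ContDiffOn ℝ (5 : ℕ) (fun z => A * g z) (univ : Set ℝ) :=
    (contDiff_const.mul (hg.of_le (WithTop.coe_le_coe.mpr le_top))).contDiffOn
  have hf2 : ContDiffOn ℝ (5 : ℕ) (fun z : ℝ => B * z + C) (univ : Set ℝ) := by
    apply ContDiff.contDiffOn; fun_prop
  have hadd := iteratedDerivWithin_add (mem_univ y) uniqueDiffOn_univ (hf1 y (mem_univ y)) (hf2 y (mem_univ y))
  have hpi : (fun z => A * g z) + (fun z : ℝ => B * z + C)
      = fun z => A * g z + (B * z + C) := rfl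
  rw [hpi] at hadd
  rw [← iteratedDerivWithin_univ, hadd, iteratedDerivWithin_univ, iteratedDerivWithin_univ]
  have h2 : iteratedDeriv 5 (fun z : ℝ => B * z + C) = fun _ => (0 : ℝ) := by
    have hd : deriv (fun z : ℝ => B * z + C) = fun _ : ℝ => B := by
      funext w
      exact (((hasDerivAt_id w).const_mul B).add_const C).deriv.trans (mul_one B)
    show iteratedDeriv (4 + 1) (fun z : ℝ => B * z + C) = fun _ => (0 : ℝ)
    rw [iteratedDeriv_succ', hd]
    exact iter_const_succ B 3
  rw [iter_cmul A hg 5, h2]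
  simp

set_option maxHeartbeats 1600000 in
/-- the fractional-linear equivalence transformations of the class
`u_t + u u_x + β(t) u_xxxxx = 0` map solutions to solutions of the equation with
transformed coefficient `β̃` (forward part of Corollary 1). -/
theorem stmt_6 (a b c d e₀ e₁ e₂ : ℝ) (hΔ : a * d - b * c ≠ 0) (he₂ : e₂ ≠ 0)
    (I : Set ℝ) (hI : IsOpen I) (hIint : I.OrdConnected)
    (hden : ∀ t ∈ I, c * t + d ≠ 0)
    (β : ℝ → ℝ) (hβ : ContDiffOn ℝ (⊤ : ℕ∞) β I) (hβ0 : ∀ t ∈ I, β t ≠ 0)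
    (J : Set ℝ) (hJ : J = (fun t => (a * t + b) / (c * t + d)) '' I)
    (u : ℝ → ℝ → ℝ)
    (hu : ContDiffOn ℝ (⊤ : ℕ∞) (fun p : ℝ × ℝ => u p.1 p.2) (I ×ˢ (univ : Set ℝ)))
    (husol : ∀ t ∈ I, ∀ x : ℝ,
      ut u t x + u t x * ux u t x + β t * ux5 u t x = 0)
    (v : ℝ → ℝ → ℝ)
    (hv : ContDiffOn ℝ (⊤ : ℕ∞) (fun p : ℝ × ℝ => v p.1 p.2) (J ×ˢ (univ : Set ℝ)))
    (hlink : ∀ t ∈ I, ∀ x : ℝ,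
      v ((a * t + b) / (c * t + d)) ((e₂ * x + e₁ * t + e₀) / (c * t + d)) =
        (e₂ * (c * t + d) * u t x - e₂ * c * x - e₀ * c + e₁ * d) / (a * d - b * c))
    (βt : ℝ → ℝ)
    (hβt : ∀ t ∈ I, βt ((a * t + b) / (c * t + d)) =
      e₂ ^ 5 * β t / ((c * t + d) ^ 3 * (a * d - b * c))) :
    ∀ s ∈ J, ∀ y : ℝ,
      ut v s y + v s y * ux v s y + βt s * ux5 v s y = 0 := by
  -- J is open
  have hJeq : J = {s' : ℝ | c * s' - a ≠ 0} ∩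
      (fun s' => (b - d * s') / (c * s' - a)) ⁻¹' I := by
    rw [hJ]; ext s'
    simp only [mem_image, mem_inter_iff, mem_setOf_eq, mem_preimage]
    constructor
    · rintro ⟨τ, hτ, rfl⟩
      have hDτ := hden τ hτ
      have h1 : c * ((a * τ + b) / (c * τ + d)) - a = -(a * d - b * c) / (c * τ + d) := by
        field_simp; ring
      have h1ne : c * ((a * τ + b) / (c * τ + d)) - a ≠ 0 := by
        rw [h1]; exact div_ne_zero (neg_ne_zero.mpr hΔ) hDτ
      refine ⟨h1ne, ?_⟩
      have h2 : (b - d * ((a * τ + b) / (c * τ + d))) / (c * ((a * τ + b) / (c * τ + d)) - a)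
          = τ := by
        rw [div_eq_iff h1ne]; have hD' : τ * c + d ≠ 0 := (by rwa [mul_comm]); field_simp; ring
      rw [h2]; exact hτ
    · rintro ⟨h1, h2⟩
      refine ⟨(b - d * s') / (c * s' - a), h2, ?_⟩
      have hDτ : c * ((b - d * s') / (c * s' - a)) + d ≠ 0 := hden _ h2
      rw [div_eq_iff hDτ]
      have h1' : s' * c - a ≠ 0 := (by rwa [mul_comm])
      field_simp
      ring
  have hJopen : IsOpen J := by
    rw [hJeq]
    refine ContinuousOn.isOpen_inter_preimage ?_ ?_ hI
    · exact ContinuousOn.div (by fun_prop) (by fun_prop) (fun x hx => hx)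
    · have : {s' : ℝ | c * s' - a ≠ 0} = (fun s' => c * s' - a) ⁻¹' ({0}ᶜ) := rfl
      rw [this]
      exact (isOpen_compl_singleton).preimage (by fun_prop)
  intro s hsJ y
  obtain ⟨t, ht, hst⟩ : ∃ t ∈ I, (a * t + b) / (c * t + d) = s := by
    rw [hJ] at hsJ; exact hsJ
  have hD : c * t + d ≠ 0 := hden t ht
  set x : ℝ := ((c * t + d) * y - e₁ * t - e₀) / e₂ with hxdef
  have hxrel : e₂ * x = (c * t + d) * y - e₁ * t - e₀ := by
    rw [hxdef]; field_simp
  have hxy : (e₂ * x + e₁ * t + e₀) / (c * t + d) = y := by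
    rw [hxrel]; field_simp; ring
  -- smooth slice in x
  have hw : ContDiff ℝ (⊤ : ℕ∞) (u t) := by
    have h1 : ContDiffOn ℝ (⊤ : ℕ∞) ((fun p : ℝ × ℝ => u p.1 p.2) ∘ (fun ξ : ℝ => (t, ξ)))
        (univ : Set ℝ) := by
      apply hu.comp (contDiff_const.prodMk contDiff_id).contDiffOn
      intro ξ _; exact ⟨ht, mem_univ ξ⟩
    exact contDiffOn_univ.mp h1
  -- the slice formula for v s
  set k : ℝ := (c * t + d) / e₂ with hkdef
  set m : ℝ := (-(e₁ * t) - e₀) / e₂ with hmdef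
  set A : ℝ := e₂ * (c * t + d) / (a * d - b * c) with hAdef
  set B : ℝ := -(c * (c * t + d)) / (a * d - b * c) with hBdef
  set Cc : ℝ := e₁ * (c * t + d) / (a * d - b * c) with hCdef
  have hkm : k * y + m = x := by
    rw [hkdef, hmdef, hxdef]; field_simp; ring
  have hvsfun : v s = fun z => A * u t (k * z + m) + (B * z + Cc) := by
    funext z
    have harg : (e₂ * (k * z + m) + e₁ * t + e₀) / (c * t + d) = z := by
      rw [hkdef, hmdef]; field_simp; ring
    have h1 := hlink t ht (k * z + m)
    rw [harg, hst] at h1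
    rw [h1, hAdef, hBdef, hCdef, hkdef, hmdef]
    field_simp
    ring
  -- x-derivative of v s
  have haff : HasDerivAt (fun z : ℝ => k * z + m) k y := by
    simpa using ((hasDerivAt_id y).const_mul k).add_const m
  have hwd : HasDerivAt (u t) (ux u t x) x :=
    ((hw.differentiable (by simp)) x).hasDerivAt
  have hcompw : HasDerivAt (fun z => u t (k * z + m)) (ux u t x * k) y := by
    have h0 : HasDerivAt (u t) (ux u t x) (k * y + m) := by rw [hkm]; exact hwd
    have h1 := h0.comp y haff
    exact h1
  have hWfull : HasDerivAt (v s) (A * (ux u t x * k) + B) y := by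
    rw [hvsfun]
    exact (hcompw.const_mul A).add (by simpa using ((hasDerivAt_id y).const_mul B).add_const Cc)
  have hW : ux v s y = A * (ux u t x * k) + B := hWfull.deriv
  -- fifth x-derivative of v s
  have hgaff : ContDiff ℝ (⊤ : ℕ∞) (fun z => u t (k * z + m)) := by
    apply hw.comp; fun_prop
  have hQ : ux5 v s y = A * (k ^ 5 * ux5 u t x) := by
    show iteratedDeriv 5 (v s) y = _
    rw [hvsfun, iter5_comb _ hgaff A B Cc, iter_aff (u t) hw k m 5]
    show A * (k ^ 5 * iteratedDeriv 5 (u t) (k * y + m)) = A * (k ^ 5 * ux5 u t x)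
    rw [hkm]
    rfl
  -- value of v
  have hV : v s y = (e₂ * (c * t + d) * u t x - e₂ * c * x - e₀ * c + e₁ * d)
      / (a * d - b * c) := by
    rw [← hst, ← hxy]; exact hlink t ht x
  -- value of βt
  have hP : βt s = e₂ ^ 5 * β t / ((c * t + d) ^ 3 * (a * d - b * c)) := by
    rw [← hst]; exact hβt t ht
  -- t-derivative of v
  have hUc : ContDiffAt ℝ (⊤ : ℕ∞) (fun p : ℝ × ℝ => u p.1 p.2) (t, x) :=
    hu.contDiffAt ((hI.prod isOpen_univ).mem_nhds ⟨ht, mem_univ x⟩)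
  have hLd : DifferentiableAt ℝ (fun p : ℝ × ℝ => u p.1 p.2) (t, x) :=
    hUc.differentiableAt (by simp)
  set L := fderiv ℝ (fun p : ℝ × ℝ => u p.1 p.2) (t, x) with hLdef
  have hL : HasFDerivAt (fun p : ℝ × ℝ => u p.1 p.2) L (t, x) := hLd.hasFDerivAt
  have hUt : ut u t x = L (1, 0) := by
    have h1 : HasDerivAt (fun τ : ℝ => (τ, x)) ((1 : ℝ), (0 : ℝ)) t :=
      (hasDerivAt_id t).prodMk (hasDerivAt_const t x)
    have h2 : HasDerivAt (fun τ => u τ x) (L (1, 0)) t := by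
      have := hL.comp_hasDerivAt t h1; exact this
    show deriv (fun τ => u τ x) t = L (1, 0)
    exact h2.deriv
  have hUx : ux u t x = L (0, 1) := by
    have h1 : HasDerivAt (fun ξ : ℝ => (t, ξ)) ((0 : ℝ), (1 : ℝ)) x :=
      (hasDerivAt_const x t).prodMk (hasDerivAt_id x)
    have h2 : HasDerivAt (fun ξ => u t ξ) (L (0, 1)) x := hL.comp_hasDerivAt x h1
    show deriv (u t) x = L (0, 1)
    exact h2.deriv
  have hXder : HasDerivAt (fun τ => ((c * τ + d) * y - e₁ * τ - e₀) / e₂)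
      ((c * y - e₁) / e₂) t := by
    have h := (((((hasDerivAt_id t).const_mul c).add_const d).mul_const y).sub
      ((hasDerivAt_id t).const_mul e₁)).sub_const e₀ |>.div_const e₂
    simpa using h
  have hφ : HasDerivAt (fun τ => u τ (((c * τ + d) * y - e₁ * τ - e₀) / e₂))
      (L (1, (c * y - e₁) / e₂)) t := by
    have h1 : HasDerivAt (fun τ : ℝ => (τ, ((c * τ + d) * y - e₁ * τ - e₀) / e₂))
        ((1 : ℝ), (c * y - e₁) / e₂) t := (hasDerivAt_id t).prodMk hXder
    have h2 : ((fun τ : ℝ => (τ, ((c * τ + d) * y - e₁ * τ - e₀) / e₂)) t) = (t, x) := by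
      simp [hxdef]
    have := HasFDerivAt.comp_hasDerivAt t (h2 ▸ hL) h1
    exact this
  have hlinL : L (1, (c * y - e₁) / e₂) = ut u t x + ((c * y - e₁) / e₂) * ux u t x := by
    have heq : ((1 : ℝ), (c * y - e₁) / e₂)
        = ((1 : ℝ), (0 : ℝ)) + ((c * y - e₁) / e₂) • ((0 : ℝ), (1 : ℝ)) := by
      simp [Prod.ext_iff]
    rw [heq, map_add, map_smul, hUt, hUx]
    simp [smul_eq_mul]
  -- derivative of the RHS of hlink in t
  have hAder : HasDerivAt (fun τ => e₂ * (c * τ + d)) (e₂ * c) t := by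
    simpa using (((hasDerivAt_id t).const_mul c).add_const d).const_mul e₂
  have hRHSder : HasDerivAt
      (fun τ => (e₂ * (c * τ + d) * u τ (((c * τ + d) * y - e₁ * τ - e₀) / e₂)
        - e₂ * c * (((c * τ + d) * y - e₁ * τ - e₀) / e₂) - e₀ * c + e₁ * d) / (a * d - b * c))
      ((e₂ * c * u t x + e₂ * (c * t + d) * (ut u t x + ((c * y - e₁) / e₂) * ux u t x)
        - e₂ * c * ((c * y - e₁) / e₂)) / (a * d - b * c)) t := by
    have h1 := ((hAder.mul hφ).sub (hXder.const_mul (e₂ * c))).sub_const (e₀ * c)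
      |>.add_const (e₁ * d) |>.div_const (a * d - b * c)
    have h2 : ((c * t + d) * y - e₁ * t - e₀) / e₂ = x := by rw [hxdef]
    rw [h2, hlinL] at h1
    exact h1
  -- chain rule for v ∘ T
  have hvdiff : DifferentiableAt ℝ (fun σ => v σ y) s := by
    have hVc : ContDiffAt ℝ (⊤ : ℕ∞) (fun p : ℝ × ℝ => v p.1 p.2) (s, y) :=
      hv.contDiffAt ((hJopen.prod isOpen_univ).mem_nhds ⟨hsJ, mem_univ y⟩)
    have h1 : DifferentiableAt ℝ (fun σ : ℝ => ((σ, y) : ℝ × ℝ)) s :=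
      (differentiableAt_id).prodMk (differentiableAt_const y)
    exact (hVc.differentiableAt (by simp)).comp s h1
  have hvt : HasDerivAt (fun σ => v σ y) (ut v s y) s := hvdiff.hasDerivAt
  have hTder : HasDerivAt (fun τ => (a * τ + b) / (c * τ + d))
      ((a * (c * t + d) - (a * t + b) * c) / (c * t + d) ^ 2) t := by
    have h1 : HasDerivAt (fun τ : ℝ => a * τ + b) a t := by
      simpa using ((hasDerivAt_id t).const_mul a).add_const b
    have h2 : HasDerivAt (fun τ : ℝ => c * τ + d) c t := by
      simpa using ((hasDerivAt_id t).const_mul c).add_const d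
    exact h1.div h2 hD
  have hchain : HasDerivAt (fun τ => v ((a * τ + b) / (c * τ + d)) y)
      (ut v s y * ((a * (c * t + d) - (a * t + b) * c) / (c * t + d) ^ 2)) t := by
    have hvt' : HasDerivAt (fun σ => v σ y) (ut v s y) ((a * t + b) / (c * t + d)) := by
      rw [hst]; exact hvt
    exact hvt'.comp t hTder
  have heventually : (fun τ => v ((a * τ + b) / (c * τ + d)) y) =ᶠ[nhds t]
      (fun τ => (e₂ * (c * τ + d) * u τ (((c * τ + d) * y - e₁ * τ - e₀) / e₂)
        - e₂ * c * (((c * τ + d) * y - e₁ * τ - e₀) / e₂) - e₀ * c + e₁ * d)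
        / (a * d - b * c)) := by
    filter_upwards [hI.mem_nhds ht] with τ hτ
    have h1 := hlink τ hτ (((c * τ + d) * y - e₁ * τ - e₀) / e₂)
    have hDτ := hden τ hτ
    have h2 : (e₂ * (((c * τ + d) * y - e₁ * τ - e₀) / e₂) + e₁ * τ + e₀) / (c * τ + d)
        = y := by
      field_simp
      ring
    rw [h2] at h1
    exact h1
  have hchain2 : HasDerivAt (fun τ => v ((a * τ + b) / (c * τ + d)) y)
      ((e₂ * c * u t x + e₂ * (c * t + d) * (ut u t x + ((c * y - e₁) / e₂) * ux u t x)
        - e₂ * c * ((c * y - e₁) / e₂)) / (a * d - b * c)) t :=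
    hRHSder.congr_of_eventuallyEq heventually
  have huniq := hchain.unique hchain2
  -- the value of ut v
  have hKne : a * (c * t + d) - (a * t + b) * c ≠ 0 := by
    have h : a * (c * t + d) - (a * t + b) * c = a * d - b * c := by ring
    rw [h]; exact hΔ
  have hUT : ut v s y = ((e₂ * c * u t x
      + e₂ * (c * t + d) * (ut u t x + ((c * y - e₁) / e₂) * ux u t x)
      - e₂ * c * ((c * y - e₁) / e₂)) / (a * d - b * c)) * (c * t + d) ^ 2
      / (a * (c * t + d) - (a * t + b) * c) := by
    rw [← huniq]
    field_simp
    have hKne' : a * (c * t + d) - c * (a * t + b) ≠ 0 := by intro h; apply hKne; linarith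
    rw [mul_div_assoc, div_self hKne', mul_one]
  -- clean polynomial identities
  have E1 : (a * d - b * c) * ux v s y = (c * t + d) ^ 2 * ux u t x - c * (c * t + d) := by
    rw [hW, hAdef, hBdef, hkdef]
    field_simp
    ring
  have E2 : e₂ ^ 4 * (a * d - b * c) * ux5 v s y = (c * t + d) ^ 6 * ux5 u t x := by
    rw [hQ, hAdef, hkdef]
    field_simp
  have E3 : (a * d - b * c) * v s y
      = e₂ * (c * t + d) * u t x - e₂ * c * x - e₀ * c + e₁ * d := by
    rw [hV]; field_simp
  have E4 : (c * t + d) ^ 3 * (a * d - b * c) * βt s = e₂ ^ 5 * β t := by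
    rw [hP]; field_simp
    exact mul_div_cancel_left₀ (β t) (by rw [mul_comm d, mul_comm c]; exact hΔ)
  have E5 : e₂ * (a * d - b * c) ^ 2 * ut v s y
      = (c * t + d) ^ 2 * (e₂ ^ 2 * c * u t x + e₂ ^ 2 * (c * t + d) * ut u t x
        + e₂ * (c * t + d) * (c * y - e₁) * ux u t x - e₂ * c * (c * y - e₁)) := by
    rw [hUT]
    have h : a * (c * t + d) - (a * t + b) * c = a * d - b * c := by ring
    rw [h]
    field_simp
    ring
  have hsol := husol t ht x
  have hNne : (c * t + d) ^ 3 * e₂ ^ 4 * (a * d - b * c) ^ 2 ≠ 0 := by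
    exact mul_ne_zero (mul_ne_zero (pow_ne_zero 3 hD) (pow_ne_zero 4 he₂))
      (pow_ne_zero 2 hΔ)
  clear_value x k m A B Cc L
  have key : (c * t + d) ^ 3 * e₂ ^ 4 * (a * d - b * c) ^ 2
      * (ut v s y + v s y * ux v s y + βt s * ux5 v s y) = 0 := by
    have E31 : ((a * d - b * c) * v s y) * ((a * d - b * c) * ux v s y)
        = (e₂ * (c * t + d) * u t x - e₂ * c * x - e₀ * c + e₁ * d)
          * ((c * t + d) ^ 2 * ux u t x - c * (c * t + d)) := by rw [E3, E1]
    have E42 : ((c * t + d) ^ 3 * (a * d - b * c) * βt s)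
        * (e₂ ^ 4 * (a * d - b * c) * ux5 v s y)
        = (e₂ ^ 5 * β t) * ((c * t + d) ^ 6 * ux5 u t x) := by rw [E4, E2]
    linear_combination ((c * t + d) ^ 3 * e₂ ^ 3) * E5
      + ((c * t + d) ^ 3 * e₂ ^ 4) * E31
      + E42
      + (e₂ ^ 5 * (c * t + d) ^ 6) * hsol
      - ((c * t + d) ^ 3 * e₂ ^ 4 * c * ((c * t + d) ^ 2 * ux u t x - c * (c * t + d))) * hxrel
  rcases mul_eq_zero.mp key with h | h
  · exact absurd h hNne
  · exact h
end

section
/- Let ρ ∈ ℝ with ρ ≠ 0 and let u : (0,∞) × ℝ → ℝ be a smooth solution of u_t + u u_x + t^ρ u_xxxxx = 0. Then for any ε ∈ ℝ, the function v(t,x) = e^{(ρ−4)ε} u(e^{−5ε} t, e^{−(ρ+1)ε} x) is also a smooth solution of v_t + v v_x + t^ρ v_xxxxx = 0 on (0,∞) × ℝ. -/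
open Real Set

lemma iteratedDeriv_cmul {n : ℕ} {f : ℝ → ℝ} (h : ContDiff ℝ n f) (c : ℝ) (x : ℝ) :
    iteratedDeriv n (fun y => c * f y) x = c * iteratedDeriv n f x := by
  rw [← iteratedDerivWithin_univ, ← iteratedDerivWithin_univ]
  exact iteratedDerivWithin_const_mul (Set.mem_univ x) uniqueDiffOn_univ c
    ((contDiffOn_univ.2 h).contDiffWithinAt (Set.mem_univ x))

/-- the scaling symmetry `5t∂_t + (ρ+1)x∂_x + (ρ-4)u∂_u`
of `u_t + u u_x + t^ρ u_xxxxx = 0` on `(0,∞) × ℝ`. -/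
theorem stmt_9 (ρ : ℝ) (hρ : ρ ≠ 0)
    (u : ℝ → ℝ → ℝ)
    (hu : ContDiffOn ℝ (⊤ : ℕ∞) (fun p : ℝ × ℝ => u p.1 p.2) (Ioi (0:ℝ) ×ˢ (univ : Set ℝ)))
    (husol : ∀ t ∈ Ioi (0:ℝ), ∀ x : ℝ,
      ut u t x + u t x * ux u t x + t ^ ρ * ux5 u t x = 0)
    (ε : ℝ) (v : ℝ → ℝ → ℝ)
    (hv : v = fun t x =>
      Real.exp ((ρ - 4) * ε) * u (Real.exp (-5 * ε) * t) (Real.exp (-(ρ + 1) * ε) * x)) :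
    ContDiffOn ℝ (⊤ : ℕ∞) (fun p : ℝ × ℝ => v p.1 p.2) (Ioi (0:ℝ) ×ˢ (univ : Set ℝ)) ∧
    ∀ t ∈ Ioi (0:ℝ), ∀ x : ℝ,
      ut v t x + v t x * ux v t x + t ^ ρ * ux5 v t x = 0 := by
  set a := Real.exp (-5 * ε) with ha
  set b := Real.exp (-(ρ + 1) * ε) with hb
  set c := Real.exp ((ρ - 4) * ε) with hc
  have hapos : 0 < a := Real.exp_pos _
  have hbpos : 0 < b := Real.exp_pos _
  have hopen : IsOpen (Ioi (0:ℝ) ×ˢ (univ : Set ℝ)) := isOpen_Ioi.prod isOpen_univ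
  -- the scaling map
  have hsc : ContDiff ℝ (⊤ : ℕ∞) (fun p : ℝ × ℝ => ((a * p.1, b * p.2) : ℝ × ℝ)) :=
    ((contDiff_const.mul contDiff_fst).prodMk (contDiff_const.mul contDiff_snd))
  have hmaps : MapsTo (fun p : ℝ × ℝ => ((a * p.1, b * p.2) : ℝ × ℝ))
      (Ioi (0:ℝ) ×ˢ (univ : Set ℝ)) (Ioi (0:ℝ) ×ˢ (univ : Set ℝ)) := by
    intro p hp
    exact ⟨mul_pos hapos hp.1, trivial⟩
  have hvsm : ContDiffOn ℝ (⊤ : ℕ∞) (fun p : ℝ × ℝ => v p.1 p.2) (Ioi (0:ℝ) ×ˢ (univ : Set ℝ)) := by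
    subst hv
    exact contDiffOn_const.mul (hu.comp hsc.contDiffOn hmaps)
  refine ⟨hvsm, ?_⟩
  intro t ht x
  have hat : 0 < a * t := mul_pos hapos ht
  -- smoothness of x ↦ u (a*t) x
  have hmaps2 : MapsTo (fun y : ℝ => ((a * t, y) : ℝ × ℝ)) (univ : Set ℝ)
      (Ioi (0:ℝ) ×ˢ (univ : Set ℝ)) := fun y _ => Set.mk_mem_prod (Set.mem_Ioi.2 hat) trivial
  have hx_smooth : ContDiff ℝ (⊤ : ℕ∞) (u (a * t)) := by
    rw [← contDiffOn_univ]
    exact hu.comp (contDiff_const.prodMk contDiff_id).contDiffOn hmaps2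
  -- ut v
  have h1 : ut v t x = c * (a * ut u (a * t) (b * x)) := by
    have hd : DifferentiableAt ℝ (fun s => u s (b * x)) (a * t) := by
      have := (hu.contDiffAt (hopen.mem_nhds (Set.mk_mem_prod (Set.mem_Ioi.2 hat) (Set.mem_univ (b * x))))).differentiableAt (by simp)
      exact this.comp (a * t) ((differentiableAt_id.prodMk (differentiableAt_const (b * x)) :
        DifferentiableAt ℝ (fun s : ℝ => (s, b * x)) (a * t)))
    have hda : HasDerivAt (fun s => a * s) a t := by
      simpa using (hasDerivAt_id t).const_mul a
    have h2 : HasDerivAt (fun s => u s (b * x)) (ut u (a * t) (b * x)) (a * t) :=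
      hd.hasDerivAt
    have h3 : HasDerivAt (fun s => u (a * s) (b * x)) (ut u (a * t) (b * x) * a) t :=
      h2.comp t hda
    have h4 : HasDerivAt (fun s => c * u (a * s) (b * x))
        (c * (ut u (a * t) (b * x) * a)) t := h3.const_mul c
    rw [ut, hv]
    rw [h4.deriv]; ring
  -- ux v
  have h2 : ux v t x = c * (b * ux u (a * t) (b * x)) := by
    have hdb : HasDerivAt (fun y => b * y) b x := by
      simpa using (hasDerivAt_id x).const_mul b
    have hdu : HasDerivAt (u (a * t)) (ux u (a * t) (b * x)) (b * x) :=
      ((hx_smooth.differentiable (by simp)) (b * x)).hasDerivAt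
    have h3 : HasDerivAt (fun y => c * u (a * t) (b * y))
        (c * (ux u (a * t) (b * x) * b)) x := ((hdu.comp x hdb).const_mul c)
    rw [ux, hv]
    rw [h3.deriv]; ring
  -- ux5 v
  have h3 : ux5 v t x = c * (b ^ 5 * ux5 u (a * t) (b * x)) := by
    rw [ux5, hv]
    have hcomp : ContDiff ℝ 5 (fun y : ℝ => u (a * t) (b * y)) :=
      (hx_smooth.of_le (WithTop.coe_le_coe.2 le_top)).comp (contDiff_const.mul contDiff_id)
    show iteratedDeriv 5 (fun y => c * u (a * t) (b * y)) x = _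
    rw [iteratedDeriv_cmul hcomp c x,
      iteratedDeriv_comp_const_mul (hx_smooth.of_le (WithTop.coe_le_coe.2 le_top)) b, ux5]
  -- conclude
  have hv0 : v t x = c * u (a * t) (b * x) := by rw [hv]
  have key := husol (a * t) hat (b * x)
  have hrpow : (a * t) ^ ρ = a ^ ρ * t ^ ρ :=
    Real.mul_rpow hapos.le (le_of_lt ht)
  rw [hrpow] at key
  have hca : c * a = Real.exp ((ρ - 9) * ε) := by
    rw [hc, ha, ← Real.exp_add]; ring_nf
  have hccb : c * c * b = Real.exp ((ρ - 9) * ε) := by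
    rw [hc, hb, ← Real.exp_add, ← Real.exp_add]; ring_nf
  have hcb5 : c * b ^ 5 = Real.exp ((ρ - 9) * ε) * a ^ ρ := by
    have e5 : b ^ 5 = Real.exp (5 * (-(ρ + 1) * ε)) := by
      rw [hb, ← Real.exp_nsmul]; norm_num [mul_comm]
    have ea : a ^ ρ = Real.exp ((-5 * ε) * ρ) := by
      rw [ha, ← Real.exp_mul]
    rw [e5, ea, hc, ← Real.exp_add, ← Real.exp_add]; ring_nf
  rw [h1, h2, h3, hv0]
  linear_combination (Real.exp ((ρ - 9) * ε)) * key + (ut u (a * t) (b * x)) * hca +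
    (u (a * t) (b * x) * ux u (a * t) (b * x)) * hccb +
    (t ^ ρ * ux5 u (a * t) (b * x)) * hcb5
end

section
/- Let ρ ∈ ℝ with ρ ≠ −1 and let φ : ℝ → ℝ be a smooth solution of the fifth-order ODE φ''''' + (φ − ((ρ+1)/5)·ω) φ' + ((ρ−4)/5)·φ = 0 (derivatives with respect to ω). Then the function u : (0,∞) × ℝ → ℝ defined by u(t,x) = t^{(ρ−4)/5} φ(x t^{−(ρ+1)/5}) is a smooth solution of u_t + u u_x + t^ρ u_xxxxx = 0 on (0,∞) × ℝ. -/
open Real Set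

lemma iter_scale (f : ℝ → ℝ) (hf : ContDiff ℝ (⊤ : ℕ∞) f) (c m : ℝ) :
    ∀ (n : ℕ) (x : ℝ),
      iteratedDeriv n (fun y => c * f (y * m)) x = c * m ^ n * iteratedDeriv n f (x * m) := by
  intro n
  induction n with
  | zero => intro x; simp
  | succ n ih =>
    intro x
    rw [iteratedDeriv_succ,
      show iteratedDeriv n (fun y => c * f (y * m)) =
        fun y => c * m ^ n * iteratedDeriv n f (y * m) from funext ih]
    have hdg : Differentiable ℝ (iteratedDeriv n f) :=
      hf.differentiable_iteratedDeriv n (by exact_mod_cast lt_top_iff_ne_top.mpr (by simp))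
    have h1 : HasDerivAt (fun y : ℝ => y * m) m x := hasDerivAt_mul_const m
    have h2 : HasDerivAt (fun y : ℝ => iteratedDeriv n f (y * m))
        (deriv (iteratedDeriv n f) (x * m) * m) x :=
      by have := ((hdg (x * m)).hasDerivAt).comp x h1; exact this
    rw [(h2.const_mul (c * m ^ n)).deriv, iteratedDeriv_succ]
    ring

/-- the similarity reduction `u = t^{(ρ-4)/5} φ(x t^{-(ρ+1)/5})`
of `u_t + u u_x + t^ρ u_xxxxx = 0` (Case 1, ρ ≠ -1, of Table 4). -/
theorem stmt_12 (ρ : ℝ) (hρ : ρ ≠ -1)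
    (φ : ℝ → ℝ) (hφ : ContDiff ℝ (⊤ : ℕ∞) φ)
    (hode : ∀ ω : ℝ, iteratedDeriv 5 φ ω +
      (φ ω - (ρ + 1) / 5 * ω) * deriv φ ω + (ρ - 4) / 5 * φ ω = 0)
    (u : ℝ → ℝ → ℝ)
    (hu : u = fun t x => t ^ ((ρ - 4) / 5) * φ (x * t ^ (-(ρ + 1) / 5))) :
    ContDiffOn ℝ (⊤ : ℕ∞) (fun p : ℝ × ℝ => u p.1 p.2) (Ioi (0:ℝ) ×ˢ (univ : Set ℝ)) ∧
    ∀ t ∈ Ioi (0:ℝ), ∀ x : ℝ,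
      ut u t x + u t x * ux u t x + t ^ ρ * ux5 u t x = 0 := by
  set a : ℝ := (ρ - 4) / 5 with ha_def
  set b : ℝ := -(ρ + 1) / 5 with hb_def
  subst hu
  constructor
  · intro p hp
    have hp1 : (0:ℝ) < p.1 := hp.1
    apply ContDiffAt.contDiffWithinAt
    have hfst : ContDiffAt ℝ (⊤ : ℕ∞) (fun q : ℝ × ℝ => q.1 ^ a) p :=
      (Real.contDiffAt_rpow_const_of_ne (ne_of_gt hp1)).comp p contDiffAt_fst
    have hfst' : ContDiffAt ℝ (⊤ : ℕ∞) (fun q : ℝ × ℝ => q.1 ^ b) p :=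
      (Real.contDiffAt_rpow_const_of_ne (ne_of_gt hp1)).comp p contDiffAt_fst
    have hinner : ContDiffAt ℝ (⊤ : ℕ∞) (fun q : ℝ × ℝ => q.2 * q.1 ^ b) p :=
      contDiffAt_snd.mul hfst'
    exact hfst.mul ((hφ.contDiffAt).comp p hinner)
  · intro t ht x
    have ht0 : (0:ℝ) < t := ht
    have htne : t ≠ 0 := ne_of_gt ht0
    set ω : ℝ := x * t ^ b with hω
    -- derivative in t
    have hb1 : HasDerivAt (fun s : ℝ => s ^ b) (b * t ^ (b - 1)) t :=
      Real.hasDerivAt_rpow_const (Or.inl htne)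
    have ha1 : HasDerivAt (fun s : ℝ => s ^ a) (a * t ^ (a - 1)) t :=
      Real.hasDerivAt_rpow_const (Or.inl htne)
    have hφd : ∀ y : ℝ, HasDerivAt φ (deriv φ y) y := fun y =>
      (hφ.differentiable (by simp) y).hasDerivAt
    have hin : HasDerivAt (fun s : ℝ => x * s ^ b) (x * (b * t ^ (b - 1))) t :=
      hb1.const_mul x
    have hcomp : HasDerivAt (fun s : ℝ => φ (x * s ^ b))
        (deriv φ ω * (x * (b * t ^ (b - 1)))) t := (hφd ω).comp t hin
    have hUt : ut (fun t x => t ^ a * φ (x * t ^ b)) t x =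
        a * t ^ (a - 1) * φ ω + t ^ a * (deriv φ ω * (x * (b * t ^ (b - 1)))) := by
      exact (ha1.mul hcomp).deriv
    -- derivative in x
    have hx1 : HasDerivAt (fun y : ℝ => y * t ^ b) (t ^ b) x := hasDerivAt_mul_const _
    have hUx : ux (fun t x => t ^ a * φ (x * t ^ b)) t x =
        t ^ a * (deriv φ ω * t ^ b) := by
      exact (((hφd ω).comp x hx1).const_mul (t ^ a)).deriv
    -- fifth derivative in x
    have hUx5 : ux5 (fun t x => t ^ a * φ (x * t ^ b)) t x =
        t ^ a * (t ^ b) ^ 5 * iteratedDeriv 5 φ ω := by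
      exact iter_scale φ hφ (t ^ a) (t ^ b) 5 x
    rw [hUt, hUx, hUx5]
    -- rpow identities
    have e1 : t ^ a * t ^ (b - 1) = t ^ (a - 1) * t ^ b := by
      rw [← Real.rpow_add ht0, ← Real.rpow_add ht0]; ring_nf
    have e2 : t ^ a * (t ^ a * t ^ b) = t ^ (a - 1) := by
      rw [← Real.rpow_add ht0, ← Real.rpow_add ht0]
      congr 1; rw [ha_def, hb_def]; ring
    have e3 : t ^ ρ * (t ^ a * (t ^ b) ^ 5) = t ^ (a - 1) := by
      rw [show ((t ^ b) ^ (5:ℕ) = t ^ (b * 5)) from by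
        rw [Real.rpow_mul ht0.le, show ((5:ℝ)) = ((5:ℕ):ℝ) by norm_num, Real.rpow_natCast],
        ← Real.rpow_add ht0, ← Real.rpow_add ht0]
      congr 1; rw [ha_def, hb_def]; ring
    have key : a * t ^ (a - 1) * φ ω + t ^ a * (deriv φ ω * (x * (b * t ^ (b - 1)))) +
        t ^ a * φ ω * (t ^ a * (deriv φ ω * t ^ b)) +
        t ^ ρ * (t ^ a * (t ^ b) ^ 5 * iteratedDeriv 5 φ ω) =
        t ^ (a - 1) * (iteratedDeriv 5 φ ω +
          (φ ω - (ρ + 1) / 5 * ω) * deriv φ ω + (ρ - 4) / 5 * φ ω) := by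
      have hxo : x * t ^ b = ω := rfl
      calc a * t ^ (a - 1) * φ ω + t ^ a * (deriv φ ω * (x * (b * t ^ (b - 1)))) +
            t ^ a * φ ω * (t ^ a * (deriv φ ω * t ^ b)) +
            t ^ ρ * (t ^ a * (t ^ b) ^ 5 * iteratedDeriv 5 φ ω)
          = a * t ^ (a - 1) * φ ω + (t ^ a * t ^ (b - 1)) * (x * b * deriv φ ω) +
            (t ^ a * (t ^ a * t ^ b)) * (φ ω * deriv φ ω) +
            (t ^ ρ * (t ^ a * (t ^ b) ^ 5)) * iteratedDeriv 5 φ ω := by ring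
        _ = a * t ^ (a - 1) * φ ω + (t ^ (a - 1) * t ^ b) * (x * b * deriv φ ω) +
            t ^ (a - 1) * (φ ω * deriv φ ω) +
            t ^ (a - 1) * iteratedDeriv 5 φ ω := by rw [e1, e2, e3]
        _ = t ^ (a - 1) * (iteratedDeriv 5 φ ω +
            (φ ω - (ρ + 1) / 5 * ω) * deriv φ ω + (ρ - 4) / 5 * φ ω) := by
            rw [hω, ha_def, hb_def]; ring
    rw [key, hode ω, mul_zero]
end

section
/- Let φ : ℝ → ℝ be a smooth solution of the fifth-order ODE φ''''' + (φ − ω/5) φ' + φ/5 = 0 (derivatives with respect to ω). Then the function u : ℝ × ℝ → ℝ defined by u(t,x) = e^{t/5} φ(x e^{−t/5}) is a smooth solution of u_t + u u_x + e^t u_xxxxx = 0 on ℝ × ℝ. -/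
open Real Set

lemma aux_iter5 (φ : ℝ → ℝ) (hφ : ContDiff ℝ (⊤ : ℕ∞) φ) (c c' x : ℝ) :
    iteratedDeriv 5 (fun y => c * φ (y * c')) x
      = c * (c' ^ 5 * iteratedDeriv 5 φ (c' * x)) := by
  have hψ : ContDiffOn ℝ 5 (fun z => φ (c' * z)) Set.univ :=
    ((hφ.of_le (WithTop.coe_le_coe.mpr le_top)).comp (contDiff_const.mul contDiff_id) :
      ContDiff ℝ 5 fun z => φ (c' * z)).contDiffOn
  have h1 : (fun y => c * φ (y * c')) = fun y => c * (fun z => φ (c' * z)) y := by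
    funext y; rw [mul_comm y c']
  rw [h1, ← iteratedDerivWithin_univ,
    iteratedDerivWithin_const_mul (Set.mem_univ x) uniqueDiffOn_univ c (hψ x (Set.mem_univ x)),
    iteratedDerivWithin_univ, iteratedDeriv_comp_const_mul (hφ.of_le (WithTop.coe_le_coe.mpr le_top)) c']

/-- the similarity reduction `u = e^{t/5} φ(x e^{-t/5})`
of `u_t + u u_x + e^t u_xxxxx = 0` (Case 2 of Table 4). -/
theorem stmt_14 (φ : ℝ → ℝ) (hφ : ContDiff ℝ (⊤ : ℕ∞) φ)
    (hode : ∀ ω : ℝ,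
      iteratedDeriv 5 φ ω + (φ ω - ω / 5) * deriv φ ω + φ ω / 5 = 0)
    (u : ℝ → ℝ → ℝ)
    (hu : u = fun t x => Real.exp (t / 5) * φ (x * Real.exp (-t / 5))) :
    ContDiff ℝ (⊤ : ℕ∞) (fun p : ℝ × ℝ => u p.1 p.2) ∧
    ∀ t x : ℝ,
      ut u t x + u t x * ux u t x + Real.exp t * ux5 u t x = 0 := by
  subst hu
  constructor
  · exact (Real.contDiff_exp.comp (contDiff_fst.div_const 5)).mul
      (hφ.comp (contDiff_snd.mul
        (Real.contDiff_exp.comp ((contDiff_fst.neg).div_const 5))))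
  · intro t x
    set ω : ℝ := x * Real.exp (-t / 5) with hω
    have hdφ : ∀ y, HasDerivAt φ (deriv φ y) y :=
      fun y => ((hφ.differentiable (by simp)).differentiableAt).hasDerivAt
    -- time derivative
    have hT : HasDerivAt (fun s => Real.exp (s / 5) * φ (x * Real.exp (-s / 5)))
        (Real.exp (t / 5) / 5 * φ ω
          + Real.exp (t / 5) * (deriv φ ω * (x * (Real.exp (-t / 5) * (-1 / 5))))) t := by
      have h1 : HasDerivAt (fun s : ℝ => Real.exp (s / 5)) (Real.exp (t / 5) / 5) t := by
        have := (Real.hasDerivAt_exp (t / 5)).comp t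
          ((hasDerivAt_id t).div_const 5)
        simpa [div_eq_mul_inv, mul_comm, Function.comp_def] using this
      have h2 : HasDerivAt (fun s : ℝ => x * Real.exp (-s / 5))
          (x * (Real.exp (-t / 5) * (-1 / 5))) t := by
        have hin : HasDerivAt (fun s : ℝ => -s / 5) (-1 / 5) t := by
          simpa using ((hasDerivAt_id t).neg.div_const 5)
        exact ((Real.hasDerivAt_exp (-t / 5)).comp t hin).const_mul x
      exact h1.mul ((hdφ ω).comp t h2)
    have hut : ut (fun t x => Real.exp (t / 5) * φ (x * Real.exp (-t / 5))) t x
        = Real.exp (t / 5) / 5 * φ ω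
          + Real.exp (t / 5) * (deriv φ ω * (x * (Real.exp (-t / 5) * (-1 / 5)))) := by
      simpa [ut] using hT.deriv
    -- space derivative
    have hX : HasDerivAt (fun y => Real.exp (t / 5) * φ (y * Real.exp (-t / 5)))
        (Real.exp (t / 5) * (deriv φ ω * Real.exp (-t / 5))) x := by
      have h2 : HasDerivAt (fun y : ℝ => y * Real.exp (-t / 5)) (Real.exp (-t / 5)) x := by
        simpa using (hasDerivAt_id x).mul_const (Real.exp (-t / 5))
      exact (((hdφ ω).comp x h2)).const_mul _
    have hux : ux (fun t x => Real.exp (t / 5) * φ (x * Real.exp (-t / 5))) t x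
        = Real.exp (t / 5) * (deriv φ ω * Real.exp (-t / 5)) := by
      simpa [ux] using hX.deriv
    -- fifth space derivative
    have hux5 : ux5 (fun t x => Real.exp (t / 5) * φ (x * Real.exp (-t / 5))) t x
        = Real.exp (t / 5) * (Real.exp (-t / 5) ^ 5 * iteratedDeriv 5 φ ω) := by
      have := aux_iter5 φ hφ (Real.exp (t / 5)) (Real.exp (-t / 5)) x
      simpa [ux5, hω, mul_comm] using this
    rw [hut, hux, hux5]
    have e1 : Real.exp (t / 5) * Real.exp (-t / 5) = 1 := by
      rw [← Real.exp_add, show t / 5 + -t / 5 = 0 by ring, Real.exp_zero]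
    have e2 : Real.exp t * (Real.exp (t / 5) * Real.exp (-t / 5) ^ 5)
        = Real.exp (t / 5) := by
      rw [← Real.exp_nat_mul, ← Real.exp_add, ← Real.exp_add]
      congr 1; push_cast; ring
    have h := hode ω
    beta_reduce
    rw [← hω]
    linear_combination Real.exp (t / 5) * h
      + (Real.exp (t / 5) * φ ω * deriv φ ω) * e1
      + (iteratedDeriv 5 φ ω) * e2
      + (Real.exp (t / 5) * deriv φ ω / 5) * hω
end

section
/- Let ν ∈ ℝ and let φ : ℝ → ℝ be a smooth solution of the fifth-order ODE φ''''' + (φ − νω) φ' + νφ + ω = 0 (derivatives with respect to ω). Then the function u : ℝ × ℝ → ℝ defined by u(t,x) = (e^{ν arctan t}/√(t²+1)) φ(ω) + x t/(t²+1), where ω = x e^{−ν arctan t}/√(t²+1), is a smooth solution of u_t + u u_x + (t²+1)^{3/2} e^{5ν arctan t} u_xxxxx = 0 on ℝ × ℝ. -/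
open Real Set

/-- the similarity reduction of
`u_t + u u_x + (t²+1)^{3/2} e^{5ν arctan t} u_xxxxx = 0` (Case 3 of Table 4). -/
theorem stmt_15 (ν : ℝ) (φ : ℝ → ℝ) (hφ : ContDiff ℝ (⊤ : ℕ∞) φ)
    (hode : ∀ ω : ℝ,
      iteratedDeriv 5 φ ω + (φ ω - ν * ω) * deriv φ ω + ν * φ ω + ω = 0)
    (u : ℝ → ℝ → ℝ)
    (hu : u = fun t x =>
      Real.exp (ν * Real.arctan t) / Real.sqrt (t ^ 2 + 1) *
        φ (x * Real.exp (-(ν * Real.arctan t)) / Real.sqrt (t ^ 2 + 1)) +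
      x * t / (t ^ 2 + 1)) :
    ContDiff ℝ (⊤ : ℕ∞) (fun p : ℝ × ℝ => u p.1 p.2) ∧
    ∀ t x : ℝ,
      ut u t x + u t x * ux u t x +
        (Real.sqrt (t ^ 2 + 1)) ^ 3 * Real.exp (5 * ν * Real.arctan t) * ux5 u t x = 0 := by
  subst hu
  have hsqne : ∀ t : ℝ, Real.sqrt (t ^ 2 + 1) ≠ 0 := fun t =>
    ne_of_gt (Real.sqrt_pos.mpr (by positivity))
  have hpne : ∀ t : ℝ, (t : ℝ) ^ 2 + 1 ≠ 0 := fun t => by positivity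
  constructor
  · -- smoothness
    have hsqrt : ContDiff ℝ (⊤ : ℕ∞) fun t : ℝ => Real.sqrt (t ^ 2 + 1) := by
      rw [contDiff_iff_contDiffAt]; intro t
      exact (Real.contDiffAt_sqrt (hpne t)).comp t
        ((contDiffAt_id.pow 2).add contDiffAt_const)
    have h1 : ContDiff ℝ (⊤ : ℕ∞) fun p : ℝ × ℝ => Real.sqrt (p.1 ^ 2 + 1) :=
      hsqrt.comp contDiff_fst
    have harct : ContDiff ℝ (⊤ : ℕ∞) fun p : ℝ × ℝ => ν * Real.arctan p.1 :=
      contDiff_const.mul (Real.contDiff_arctan.comp contDiff_fst)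
    have hfrac : ContDiff ℝ (⊤ : ℕ∞) fun p : ℝ × ℝ =>
        Real.exp (ν * Real.arctan p.1) / Real.sqrt (p.1 ^ 2 + 1) :=
      (harct.exp).div h1 fun p => hsqne p.1
    have harg : ContDiff ℝ (⊤ : ℕ∞) fun p : ℝ × ℝ =>
        p.2 * Real.exp (-(ν * Real.arctan p.1)) / Real.sqrt (p.1 ^ 2 + 1) :=
      (contDiff_snd.mul (harct.neg.exp)).div h1 fun p => hsqne p.1
    have hlast : ContDiff ℝ (⊤ : ℕ∞) fun p : ℝ × ℝ => p.2 * p.1 / (p.1 ^ 2 + 1) :=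
      (contDiff_snd.mul contDiff_fst).div
        (((contDiff_fst.pow 2)).add contDiff_const) fun p => hpne p.1
    exact (hfrac.mul (hφ.comp harg)).add hlast
  · intro t x
    have hφ' : ∀ y, HasDerivAt φ (deriv φ y) y := fun y =>
      ((hφ.differentiable (by simp)) y).hasDerivAt
    set s : ℝ := Real.sqrt (t ^ 2 + 1) with hs_def
    have hs2 : s ^ 2 = t ^ 2 + 1 := Real.sq_sqrt (by positivity)
    have hs0 : s ≠ 0 := hsqne t
    set E : ℝ := Real.exp (ν * Real.arctan t) with hE_def
    set E' : ℝ := Real.exp (-(ν * Real.arctan t)) with hE'_def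
    have hE0 : E ≠ 0 := Real.exp_ne_zero _
    have hEE' : E * E' = 1 := by
      rw [hE_def, hE'_def, ← Real.exp_add]; simp
    have hE5 : Real.exp (5 * ν * Real.arctan t) = E ^ 5 := by
      rw [hE_def, ← Real.exp_nat_mul]; ring_nf
    set ω : ℝ := x * E' / s with hω_def
    -- derivative in x
    have hux : ux (fun t x => Real.exp (ν * Real.arctan t) / Real.sqrt (t ^ 2 + 1) *
          φ (x * Real.exp (-(ν * Real.arctan t)) / Real.sqrt (t ^ 2 + 1)) +
          x * t / (t ^ 2 + 1)) t x
        = E / s * (deriv φ ω * (E' / s)) + t / (t ^ 2 + 1) := by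
      have harg : HasDerivAt (fun y : ℝ => y * E' / s) (E' / s) x := by
        simpa using ((hasDerivAt_id x).mul_const E').div_const s
      have h1 : HasDerivAt (fun y : ℝ => E / s * φ (y * E' / s))
          (E / s * (deriv φ ω * (E' / s))) x :=
        ((hφ' ω).comp x harg).const_mul (E / s)
      have h2 : HasDerivAt (fun y : ℝ => y * t / (t ^ 2 + 1)) (t / (t ^ 2 + 1)) x := by
        simpa using ((hasDerivAt_id x).mul_const t).div_const (t ^ 2 + 1)
      exact (h1.add h2).deriv
    -- fifth derivative in x
    have hux5 : ux5 (fun t x => Real.exp (ν * Real.arctan t) / Real.sqrt (t ^ 2 + 1) *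
          φ (x * Real.exp (-(ν * Real.arctan t)) / Real.sqrt (t ^ 2 + 1)) +
          x * t / (t ^ 2 + 1)) t x
        = E / s * ((E' / s) ^ 5 * iteratedDeriv 5 φ ω) := by
      have hfun : ((fun t x => Real.exp (ν * Real.arctan t) / Real.sqrt (t ^ 2 + 1) *
          φ (x * Real.exp (-(ν * Real.arctan t)) / Real.sqrt (t ^ 2 + 1)) +
          x * t / (t ^ 2 + 1)) t)
          = fun y : ℝ => (E / s * φ (E' / s * y)) + (y * (t / (t ^ 2 + 1))) := by
        funext y
        show Real.exp (ν * Real.arctan t) / Real.sqrt (t ^ 2 + 1) *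
          φ (y * Real.exp (-(ν * Real.arctan t)) / Real.sqrt (t ^ 2 + 1)) +
          y * t / (t ^ 2 + 1) = _
        rw [show y * Real.exp (-(ν * Real.arctan t)) / Real.sqrt (t ^ 2 + 1)
            = E' / s * y by rw [hE'_def, hs_def]; ring]
        rw [hE_def, hs_def]; ring
      unfold ux5
      rw [hfun]
      have hcomp : ContDiff ℝ 5 fun y : ℝ => E / s * φ (E' / s * y) :=
        (contDiff_const.mul (hφ.comp (contDiff_const.mul contDiff_id))).of_le (WithTop.coe_le_coe.mpr le_top)
      have hlin : ContDiff ℝ 5 fun y : ℝ => y * (t / (t ^ 2 + 1)) :=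
        contDiff_id.mul contDiff_const
      have hadd : iteratedDeriv 5
            (fun y : ℝ => (E / s * φ (E' / s * y)) + (y * (t / (t ^ 2 + 1)))) x
          = iteratedDeriv 5 (fun y : ℝ => E / s * φ (E' / s * y)) x
            + iteratedDeriv 5 (fun y : ℝ => y * (t / (t ^ 2 + 1))) x := by
        rw [← iteratedDerivWithin_univ
            (f := fun y : ℝ => (E / s * φ (E' / s * y)) + (y * (t / (t ^ 2 + 1)))),
          ← iteratedDerivWithin_univ (f := fun y : ℝ => E / s * φ (E' / s * y)),
          ← iteratedDerivWithin_univ (f := fun y : ℝ => y * (t / (t ^ 2 + 1)))]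
        exact iteratedDerivWithin_add (Set.mem_univ x) uniqueDiffOn_univ
          (by exact_mod_cast hcomp.contDiffAt.contDiffWithinAt)
          (by exact_mod_cast hlin.contDiffAt.contDiffWithinAt)
      rw [hadd]
      have hz : iteratedDeriv 5 (fun y : ℝ => y * (t / (t ^ 2 + 1))) x = 0 := by
        have h : deriv (fun y : ℝ => y * (t / (t ^ 2 + 1))) = fun _ => t / (t ^ 2 + 1) := by
          funext y; simp
        rw [show (5:ℕ) = 4+1 from rfl, iteratedDeriv_succ', h,
          show (4:ℕ) = 3+1 from rfl, iteratedDeriv_succ', deriv_const',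
          show (3:ℕ) = 2+1 from rfl, iteratedDeriv_succ', deriv_const',
          show (2:ℕ) = 1+1 from rfl, iteratedDeriv_succ', deriv_const',
          iteratedDeriv_one, deriv_const']
      rw [hz, add_zero]
      have hφc : ContDiff ℝ 5 (fun y : ℝ => φ (E' / s * y)) := by
        exact (hφ.of_le (WithTop.coe_le_coe.mpr le_top)).comp (contDiff_const.mul contDiff_id)
      rw [← iteratedDerivWithin_univ (f := fun y : ℝ => E / s * φ (E' / s * y)),
        iteratedDerivWithin_const_mul (Set.mem_univ x) uniqueDiffOn_univ (E / s)
          (show ContDiffWithinAt ℝ ((5:ℕ) : WithTop ℕ∞) (fun y : ℝ => φ (E' / s * y)) univ x by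
            exact_mod_cast hφc.contDiffAt.contDiffWithinAt),
        iteratedDerivWithin_univ, iteratedDeriv_comp_const_mul (hφ.of_le (WithTop.coe_le_coe.mpr le_top))]
      show E / s * ((E' / s) ^ 5 * iteratedDeriv 5 φ (E' / s * x)) = _
      rw [show E' / s * x = ω by rw [hω_def]; ring]
    -- derivative in t
    have h0 : HasDerivAt (fun r : ℝ => ν * Real.arctan r) (ν * (1 / (1 + t ^ 2))) t :=
      (Real.hasDerivAt_arctan t).const_mul ν
    have hEd : HasDerivAt (fun r : ℝ => Real.exp (ν * Real.arctan r))
        (E * (ν * (1 / (1 + t ^ 2)))) t := h0.exp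
    have hE'd : HasDerivAt (fun r : ℝ => Real.exp (-(ν * Real.arctan r)))
        (E' * -(ν * (1 / (1 + t ^ 2)))) t := h0.neg.exp
    have hpoly : HasDerivAt (fun r : ℝ => r ^ 2 + 1) (2 * t) t := by
      simpa using (hasDerivAt_pow 2 t).add_const 1
    have hsqd : HasDerivAt (fun r : ℝ => Real.sqrt (r ^ 2 + 1)) (2 * t / (2 * s)) t :=
      hpoly.sqrt (hpne t)
    have hA : HasDerivAt (fun r : ℝ => Real.exp (ν * Real.arctan r) / Real.sqrt (r ^ 2 + 1))
        ((E * (ν * (1 / (1 + t ^ 2))) * s - E * (2 * t / (2 * s))) / s ^ 2) t :=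
      hEd.div hsqd hs0
    have hNum : HasDerivAt (fun r : ℝ => x * Real.exp (-(ν * Real.arctan r)))
        (x * (E' * -(ν * (1 / (1 + t ^ 2))))) t := hE'd.const_mul x
    have hθ : HasDerivAt
        (fun r : ℝ => x * Real.exp (-(ν * Real.arctan r)) / Real.sqrt (r ^ 2 + 1))
        ((x * (E' * -(ν * (1 / (1 + t ^ 2)))) * s - x * E' * (2 * t / (2 * s))) / s ^ 2) t :=
      hNum.div hsqd hs0
    have hφθ : HasDerivAt
        (fun r : ℝ => φ (x * Real.exp (-(ν * Real.arctan r)) / Real.sqrt (r ^ 2 + 1)))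
        (deriv φ ω *
          ((x * (E' * -(ν * (1 / (1 + t ^ 2)))) * s - x * E' * (2 * t / (2 * s))) / s ^ 2)) t :=
      (hφ' ω).comp t hθ
    have hlastt : HasDerivAt (fun r : ℝ => x * r / (r ^ 2 + 1))
        ((x * 1 * (t ^ 2 + 1) - x * t * (2 * t)) / (t ^ 2 + 1) ^ 2) t :=
      ((hasDerivAt_id t).const_mul x).div hpoly (hpne t)
    have hut : ut (fun t x => Real.exp (ν * Real.arctan t) / Real.sqrt (t ^ 2 + 1) *
          φ (x * Real.exp (-(ν * Real.arctan t)) / Real.sqrt (t ^ 2 + 1)) +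
          x * t / (t ^ 2 + 1)) t x
        = ((E * (ν * (1 / (1 + t ^ 2))) * s - E * (2 * t / (2 * s))) / s ^ 2) * φ ω
          + E / s * (deriv φ ω *
            ((x * (E' * -(ν * (1 / (1 + t ^ 2)))) * s - x * E' * (2 * t / (2 * s))) / s ^ 2))
          + (x * 1 * (t ^ 2 + 1) - x * t * (2 * t)) / (t ^ 2 + 1) ^ 2 := by
      exact ((hA.mul hφθ).add hlastt).deriv
    have huval : ((fun t x => Real.exp (ν * Real.arctan t) / Real.sqrt (t ^ 2 + 1) *
          φ (x * Real.exp (-(ν * Real.arctan t)) / Real.sqrt (t ^ 2 + 1)) +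
          x * t / (t ^ 2 + 1)) t x) = E / s * φ ω + x * t / (t ^ 2 + 1) := rfl
    rw [hut, hux, hux5, hE5, huval]
    -- now pure algebra
    have hx : x = ω * s * E := by
      rw [hω_def]; field_simp; linear_combination (-x) * hEE'
    have hode' := hode ω
    set P := φ ω
    set Q := deriv φ ω
    set R := iteratedDeriv 5 φ ω
    have hR : R = -((P - ν * ω) * Q + ν * P + ω) := by linarith
    rw [hx, hR]
    have hs2' : s ^ 2 = 1 + t ^ 2 := by rw [hs2]; ring
    have he' : E' = E⁻¹ := by rw [hE'_def, hE_def, ← Real.exp_neg]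
    rw [he', ← hs2, ← hs2']
    field_simp
    linear_combination (E * x * E' * s⁻¹) * hs2
end
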